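/- arXiv:2412.01974 — 5 statements merged into one kernel-verified Lean document; each statement's English description precedes it below -/
import Mathlib

section
/- Let φ be a substitution of constant length k. For every sequence x : ℤ → A, every m ≥ 1, and every word i = i₀⋯i_{m-1} over {0,…,k-1}, the sequence obtained by applying the letter-maps Ψ_{i_{m-1}} ∘ ⋯ ∘ Ψ_{i_0} coordinatewise to x equals the sequence n ↦ (φ^m(x))_{k^m·n + s}, where s = Σ_{l=0}^{m-1} i_{m-l-1}·k^l. -/
/-- The extension of a substitution `φ : A → A*` to finite words, by concatenation. -/
def substWord {A : Type*} (φ : A → List A) (w : List A) : List A := w.flatMap φ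

/-- The extension of a substitution of constant length `k` to biinfinite sequences:
position `0` of the image is the start of `φ(x 0)`. -/
def substZ {A : Type*} [Inhabited A] (φ : A → List A) (k : ℕ) (x : ℤ → A) : ℤ → A :=
  fun n => (φ (x (Int.fdiv n (k : ℤ)))).getD (Int.fmod n (k : ℤ)).toNat default

/-- The shift `T^c` on biinfinite sequences (`T` is the left shift). -/
def shiftZ {A : Type*} (c : ℤ) (x : ℤ → A) : ℤ → A := fun n => x (n + c)

/-- The composition `Ψ_{i_{m-1}} ∘ ⋯ ∘ Ψ_{i_0}` of the column maps of a substitution of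
constant length `k`, where `Ψ_i` sends a letter `a` to the `i`-th letter of `φ(a)`. -/
def psiWord {A : Type*} [Inhabited A] (φ : A → List A) {m k : ℕ} (i : Fin m → Fin k) : A → A :=
  fun a => (List.ofFn i).foldl (fun b j => (φ b).getD (j : ℕ) default) a

/-- The `k`-kernel of a biinfinite sequence `x`: the set of subsequences
`n ↦ x (k^m * n + j)` for `m ≥ 0` and `0 ≤ j < k^m`. -/
def kernelK {A : Type*} (k : ℕ) (x : ℤ → A) : Set (ℤ → A) :=
  {y | ∃ (m j : ℕ), j < k ^ m ∧ y = fun n => x ((k : ℤ) ^ m * n + (j : ℤ))}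

/-! Reading `φ^(m+1)(x)` at `k^(m+1) n + s` peels off the leading digit `i₀` of `s`:
`k^(m+1) n + s = k^m (k n + i₀) + s'`, and `φ(x)` at `k n + i₀` is `Ψ_{i₀}(x n)`, so induction on
`m` applied to the sequence `φ(x)` gives the claim. -/

section

variable {A : Type*} [Inhabited A] (φ : A → List A) {k : ℕ}

theorem substZ_apply_mul_add (x : ℤ → A) (n : ℤ) (j : Fin k) :
    substZ φ k x ((k : ℤ) * n + (j : ℤ)) = (φ (x n)).getD (j : ℕ) default := by
  have hk : (0 : ℤ) < k := by exact_mod_cast j.pos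
  have hj : (j : ℤ) < k := by exact_mod_cast j.isLt
  have hdiv : Int.fdiv ((k : ℤ) * n + j) k = n := by
    rw [Int.fdiv_eq_ediv_of_nonneg _ hk.le, add_comm, Int.add_mul_ediv_left _ _ hk.ne',
      Int.ediv_eq_zero_of_lt (by positivity) hj, zero_add]
  have hmod : Int.fmod ((k : ℤ) * n + j) k = j := by
    rw [Int.fmod_eq_emod_of_nonneg _ hk.le, add_comm, Int.add_mul_emod_self_left,
      Int.emod_eq_of_lt (by positivity) hj]
  simp [substZ, hdiv, hmod]

theorem psiWord_succ {m : ℕ} (i : Fin (m + 1) → Fin k) (a : A) :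
    psiWord φ i a = psiWord φ (Fin.tail i) ((φ a).getD (i 0 : ℕ) default) := by
  simp only [psiWord, List.ofFn_succ]
  rfl

end

theorem sum_rev_mul_pow_succ {k m : ℕ} (i : Fin (m + 1) → Fin k) :
    ∑ l : Fin (m + 1), ((i l.rev : ℕ) : ℤ) * (k : ℤ) ^ (l : ℕ)
      = (i 0 : ℤ) * (k : ℤ) ^ m + ∑ l : Fin m, ((Fin.tail i l.rev : ℕ) : ℤ) * (k : ℤ) ^ (l : ℕ) := by
  have hrev : ∀ l : Fin m, l.castSucc.rev = l.rev.succ := fun l => by ext; simp [Fin.rev]; omega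
  simp [Fin.sum_univ_castSucc, hrev, Fin.tail, add_comm]

theorem psiWord_apply_eq_subst_pow_general {A : Type*} [Inhabited A] (φ : A → List A) (k : ℕ)
    (x : ℤ → A) (m : ℕ)
    (i : Fin m → Fin k) (n : ℤ) :
    psiWord φ i (x n)
      = (substZ φ k)^[m] x
          ((k : ℤ) ^ m * n + ∑ l : Fin m, ((i l.rev : ℕ) : ℤ) * (k : ℤ) ^ (l : ℕ)) := by
  induction m generalizing x n with
  | zero => simp [psiWord]
  | succ m ih =>
    have hindex : (k : ℤ) ^ (m + 1) * n + ∑ l : Fin (m + 1), ((i l.rev : ℕ) : ℤ) * (k : ℤ) ^ (l : ℕ)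
        = (k : ℤ) ^ m * (k * n + (i 0 : ℤ))
          + ∑ l : Fin m, ((Fin.tail i l.rev : ℕ) : ℤ) * (k : ℤ) ^ (l : ℕ) := by
      rw [sum_rev_mul_pow_succ]; ring
    rw [psiWord_succ, ← substZ_apply_mul_add, ih, hindex, Function.iterate_succ_apply]

/-- For a substitution `φ` of constant length `k`, a biinfinite sequence `x`, `m ≥ 1`, and
a word `i = i₀⋯i_{m-1}` over `{0,…,k-1}`, applying `Ψ_{i_{m-1}} ∘ ⋯ ∘ Ψ_{i_0}`
coordinatewise to `x` yields the sequence `n ↦ (φ^m(x))_{k^m·n + s}` with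
`s = Σ_{l<m} i_{m-l-1}·k^l`. -/
theorem psiWord_apply_eq_subst_pow {A : Type*} [Inhabited A] (φ : A → List A) (k : ℕ)
    (hk : 0 < k) (hlen : ∀ a, (φ a).length = k) (x : ℤ → A) (m : ℕ) (hm : 1 ≤ m)
    (i : Fin m → Fin k) (n : ℤ) :
    psiWord φ i (x n)
      = (substZ φ k)^[m] x
          ((k : ℤ) ^ m * n + ∑ l : Fin m, ((i l.rev : ℕ) : ℤ) * (k : ℤ) ^ (l : ℕ)) :=
  psiWord_apply_eq_subst_pow_general φ k x m i n
end

section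
/- Let φ be a substitution of constant length k ≥ 2 and let x be a biinfinite sequence fixed by φ. Then the k-kernel of x is contained in the set {Ψ_i(x) : i a word over {0,…,k-1}}, which is finite; in particular every fixed point of a constant-length-k substitution is k-automatic. -/
/-!
Writing `j < k^m` in base `k` as `j = k^(m-1) i₀ + ⋯ + k i_{m-2} + i_{m-1}` and using the
fixed-point equation in the form `x (k q + r) = Ψ_r (x q)`, one peels off the digits of `j`
from the last one and gets `x (k^m n + j) = Ψ_{i_{m-1}} (⋯ Ψ_{i_0} (x n))`. Every kernel element is thus `g ∘ x` for one
of the finitely many maps `g : A → A`.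
-/

section

variable {A : Type*} [Inhabited A] (φ : A → List A)

lemma psiWord_snoc {m k : ℕ} (i : Fin m → Fin k) (r : Fin k) (a : A) :
    psiWord φ (Fin.snoc i r) a = (φ (psiWord φ i a)).getD r default := by
  rw [psiWord, List.ofFn_succ']
  simp [psiWord, List.concat_eq_append]

lemma substZ_mul_add {k : ℕ} (x : ℤ → A) (q : ℤ) {r : ℕ} (hr : r < k) :
    substZ φ k x (k * q + r) = (φ (x q)).getD r default := by
  have hk : (0 : ℤ) < k := by omega
  have hdiv : Int.fdiv (k * q + r) k = q := by
    rw [Int.fdiv_eq_ediv_of_nonneg _ hk.le, add_comm, Int.add_mul_ediv_left _ _ hk.ne',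
      Int.ediv_eq_zero_of_lt (by positivity) (by exact_mod_cast hr), zero_add]
  have hmod : Int.fmod (k * q + r) k = r := by
    rw [Int.fmod_eq_emod_of_nonneg _ hk.le, add_comm, Int.add_mul_emod_self_left,
      Int.emod_eq_of_lt (by positivity) (by exact_mod_cast hr)]
  simp only [substZ, hdiv, hmod, Int.toNat_natCast]

def psiImages (k : ℕ) (x : ℤ → A) : Set (ℤ → A) :=
  {y | ∃ (m : ℕ) (i : Fin m → Fin k), y = fun n => psiWord φ i (x n)}

lemma psiImages_finite [Finite A] (k : ℕ) (x : ℤ → A) : (psiImages φ k x).Finite :=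
  (Set.finite_range fun g : A → A => g ∘ x).subset <| by
    rintro _ ⟨m, i, rfl⟩
    exact ⟨psiWord φ i, rfl⟩

lemma exists_psiWord_of_substZ_eq {k : ℕ} {x : ℤ → A} (hfix : substZ φ k x = x)
    {m j : ℕ} (hj : j < k ^ m) : ∃ i : Fin m → Fin k,
      (fun n => x ((k : ℤ) ^ m * n + j)) = fun n => psiWord φ i (x n) := by
  induction m generalizing j with
  | zero =>
    obtain rfl : j = 0 := by simpa using hj
    exact ⟨Fin.elim0, by simp [psiWord]⟩
  | succ m ih =>
    have hk : 0 < k := Nat.pos_of_ne_zero fun h => by simp [h] at hj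
    obtain ⟨i, hi⟩ := ih (j := j / k) (Nat.div_lt_of_lt_mul (by rwa [mul_comm, ← pow_succ]))
    refine ⟨Fin.snoc i ⟨j % k, Nat.mod_lt j hk⟩, funext fun n => ?_⟩
    have hj : (k : ℤ) ^ (m + 1) * n + j = k * (k ^ m * n + (j / k : ℕ)) + (j % k : ℕ) := by
      have : (j : ℤ) = k * (j / k : ℕ) + (j % k : ℕ) := by exact_mod_cast (Nat.div_add_mod j k).symm
      rw [this]; ring
    rw [hj, ← hfix, substZ_mul_add φ x _ (Nat.mod_lt j hk), hfix, psiWord_snoc, congrFun hi n]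

lemma kernelK_subset_psiImages {k : ℕ} {x : ℤ → A} (hfix : substZ φ k x = x) :
    kernelK k x ⊆ psiImages φ k x := by
  rintro _ ⟨m, j, hj, rfl⟩
  obtain ⟨i, hi⟩ := exists_psiWord_of_substZ_eq φ hfix hj
  exact ⟨m, i, hi⟩

end

theorem kernel_of_fixed_point_subset_psi_general {A : Type*} [Inhabited A] [Fintype A]
    (φ : A → List A) (k : ℕ)
    (x : ℤ → A) (hfix : substZ φ k x = x) :
    kernelK k x ⊆ {y : ℤ → A | ∃ (m : ℕ) (i : Fin m → Fin k), y = fun n => psiWord φ i (x n)} ∧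
    Set.Finite {y : ℤ → A | ∃ (m : ℕ) (i : Fin m → Fin k), y = fun n => psiWord φ i (x n)} ∧
    (kernelK k x).Finite := by
  have hsub := kernelK_subset_psiImages φ hfix
  have hfin := psiImages_finite φ k x
  exact ⟨hsub, hfin, hfin.subset hsub⟩

/-- Let `φ` be a substitution of constant length `k ≥ 2` on a finite alphabet and `x` a
biinfinite fixed point of `φ`. Then the `k`-kernel of `x` is contained in the set
`{Ψ_i(x) : i a word over {0,…,k-1}}`, which is finite; in particular the `k`-kernel of `x`
is finite, i.e. `x` is `k`-automatic. -/
theorem kernel_of_fixed_point_subset_psi {A : Type*} [Inhabited A] [Fintype A]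
    (φ : A → List A) (k : ℕ) (hk : 2 ≤ k) (hlen : ∀ a, (φ a).length = k)
    (x : ℤ → A) (hfix : substZ φ k x = x) :
    kernelK k x ⊆ {y : ℤ → A | ∃ (m : ℕ) (i : Fin m → Fin k), y = fun n => psiWord φ i (x n)} ∧
    Set.Finite {y : ℤ → A | ∃ (m : ℕ) (i : Fin m → Fin k), y = fun n => psiWord φ i (x n)} ∧
    (kernelK k x).Finite :=
  kernel_of_fixed_point_subset_psi_general φ k x hfix
end

section
/- For any substitution φ of constant length k on a finite alphabet A, there exists n ≥ 1 such that φ^n is column-constant, i.e., the sets F_{φ^n, m} of composed column maps coincide for all m ≥ 1. -/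
open Pointwise

/-- The family `F_{φ,m}` of letter-level column maps of a constant-length-`k`
substitution: all compositions `Ψ_{i_{m-1}} ∘ ⋯ ∘ Ψ_{i_0}` with `i_j ∈ {0,…,k-1}`. -/
def Fset {A : Type*} [Inhabited A] (φ : A → List A) (k m : ℕ) : Set (A → A) :=
  {f | ∃ i : Fin m → Fin k, f = psiWord φ i}

/-- `F_{φ,m}` viewed as a set of endomorphisms of `A`, so that the pointwise
monoid structure on `Set (Function.End A)` is available. -/
def FsetE {A : Type*} [Inhabited A] (φ : A → List A) (k m : ℕ) : Set (Function.End A) :=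
  Fset φ k m

lemma mem_FsetE {A : Type*} [Inhabited A] {φ : A → List A} {k m : ℕ} {f : Function.End A} :
    f ∈ FsetE φ k m ↔ ∃ i : Fin m → Fin k, f = psiWord φ i := Iff.rfl

/-- Splitting off the first column map. -/
lemma psiWord_succ_s6 {A : Type*} [Inhabited A] (φ : A → List A) {m k : ℕ}
    (i : Fin (m + 1) → Fin k) :
    psiWord φ i =
      (psiWord φ (fun j : Fin m => i j.succ)) ∘
        (fun b => (φ b).getD ((i 0 : Fin k) : ℕ) default) := by
  funext a
  simp [psiWord, List.ofFn_succ, List.foldl_cons, Function.comp]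

lemma psiWord_one {A : Type*} [Inhabited A] (φ : A → List A) {k : ℕ} (i : Fin 1 → Fin k) :
    psiWord φ i = fun b => (φ b).getD ((i 0 : Fin k) : ℕ) default := by
  funext a
  simp [psiWord, List.ofFn_succ, List.ofFn_zero]

lemma psiWord_cons {A : Type*} [Inhabited A] (φ : A → List A) {m k : ℕ} (j0 : Fin k)
    (i : Fin m → Fin k) :
    psiWord φ (Fin.cons j0 i : Fin (m + 1) → Fin k) =
      (psiWord φ i) ∘ (fun b => (φ b).getD ((j0 : Fin k) : ℕ) default) := by
  have h : (fun j : Fin m => (Fin.cons j0 i : Fin (m + 1) → Fin k) j.succ) = i := by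
    funext j; simp
  rw [psiWord_succ_s6, h, Fin.cons_zero]

/-- `F_{φ,m}` is the `m`-th power of `F_{φ,1}` in the pointwise monoid of sets of
endomorphisms. -/
lemma FsetE_eq_pow {A : Type*} [Inhabited A] (φ : A → List A) (k : ℕ) (m : ℕ) :
    FsetE φ k m = FsetE φ k 1 ^ m := by
  induction m with
  | zero =>
    ext f
    rw [pow_zero, Set.mem_one, mem_FsetE]
    constructor
    · rintro ⟨i, rfl⟩
      show psiWord φ i = (1 : Function.End A)
      funext a
      show psiWord φ i a = a
      simp [psiWord, List.ofFn_zero]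
    · intro hf
      refine ⟨Fin.elim0, ?_⟩
      funext a
      have : f a = a := congrFun hf a
      rw [show (psiWord φ (Fin.elim0 : Fin 0 → Fin k)) a = a by
        simp [psiWord, List.ofFn_zero], this]
  | succ n ih =>
    ext f
    rw [pow_succ, ← ih, mem_FsetE]
    constructor
    · rintro ⟨i, rfl⟩
      rw [psiWord_succ_s6]
      have h1 : (fun b => (φ b).getD ((i 0 : Fin k) : ℕ) default) ∈ FsetE φ k 1 := by
        refine ⟨fun _ => i 0, ?_⟩
        funext a
        simp [psiWord, List.ofFn_succ, List.ofFn_zero]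
      have h2 : psiWord φ (fun j : Fin n => i j.succ) ∈ FsetE φ k n :=
        ⟨fun j => i j.succ, rfl⟩
      exact Set.mul_mem_mul h2 h1
    · rintro ⟨g, hg, h, hh, rfl⟩
      obtain ⟨ig, rfl⟩ := hg
      obtain ⟨ih1, rfl⟩ := hh
      refine ⟨Fin.cons (ih1 0) ig, ?_⟩
      rw [psiWord_cons, psiWord_one]
      rfl

/-- In a finite monoid every element has an idempotent positive power. -/
lemma exists_idem_pow {M : Type*} [Monoid M] [Finite M] (a : M) :
    ∃ n : ℕ, 0 < n ∧ a ^ n * a ^ n = a ^ n := by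
  obtain ⟨i, j, hne, heq⟩ := Finite.exists_ne_map_eq_of_infinite (fun n : ℕ => a ^ n)
  wlog hij : i < j generalizing i j
  · exact this j i hne.symm heq.symm (by omega)
  obtain ⟨p, hp, hj⟩ : ∃ p, 0 < p ∧ j = i + p := ⟨j - i, by omega, by omega⟩
  simp only [hj] at heq
  have key : ∀ t d : ℕ, a ^ (i + d + t * p) = a ^ (i + d) := by
    intro t
    induction t with
    | zero => simp
    | succ t iht =>
      intro d
      have h1 : i + d + (t + 1) * p = (i + p) + (d + t * p) := by
        rw [Nat.succ_mul]; ring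
      calc a ^ (i + d + (t + 1) * p) = a ^ (i + p) * a ^ (d + t * p) := by
            rw [h1, pow_add]
        _ = a ^ i * a ^ (d + t * p) := by rw [← heq]
        _ = a ^ (i + d + t * p) := by rw [← pow_add]; ring_nf
        _ = a ^ (i + d) := iht d
  refine ⟨p * (i + 1), by positivity, ?_⟩
  obtain ⟨d, hd⟩ : ∃ d, p * (i + 1) = i + d := by
    refine ⟨p * (i + 1) - i, ?_⟩
    have : i + 1 ≤ p * (i + 1) := Nat.le_mul_of_pos_left _ hp
    omega
  have h2 : p * (i + 1) + p * (i + 1) = i + d + (i + 1) * p := by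
    rw [← hd]; ring
  calc a ^ (p * (i + 1)) * a ^ (p * (i + 1))
      = a ^ (p * (i + 1) + p * (i + 1)) := by rw [pow_add]
    _ = a ^ (i + d + (i + 1) * p) := by rw [h2]
    _ = a ^ (i + d) := key (i + 1) d
    _ = a ^ (p * (i + 1)) := by rw [hd]

/-- For any substitution `φ` of constant length `k` on a finite alphabet, there exists
`n ≥ 1` such that `φ^n` is column-constant: the sets `F_{φ^n,m} = F_{φ,nm}` coincide for
all `m ≥ 1` (equivalently, they all equal `F_{φ^n,1} = F_{φ,n}`). -/
theorem exists_power_column_constant {A : Type*} [Inhabited A] [Fintype A]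
    (φ : A → List A) (k : ℕ) (hk : 0 < k) (hlen : ∀ a, (φ a).length = k) :
    ∃ n : ℕ, 1 ≤ n ∧ ∀ m : ℕ, 1 ≤ m → Fset φ k (n * m) = Fset φ k n := by
  haveI : Finite (Function.End A) := Finite.of_equiv (A → A) (Equiv.refl _)
  obtain ⟨n, hn, hidem⟩ := exists_idem_pow (FsetE φ k 1)
  refine ⟨n, hn, fun m hm => ?_⟩
  have : FsetE φ k (n * m) = FsetE φ k n := by
    rw [FsetE_eq_pow φ k (n * m), FsetE_eq_pow φ k n, pow_mul]
    obtain ⟨m', rfl⟩ : ∃ m', m = m' + 1 := ⟨m - 1, by omega⟩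
    exact IsIdempotentElem.pow_succ_eq m' hidem
  exact this
end

section
/- Let φ be a substitution on alphabet A, v a finite word over A, and m ≥ 1. Then the one-sided sequence v · φ^m(v) · φ^{2m}(v) · ⋯ is substitutive: it is the image under a coding of a fixed point of the substitution φ' on A ∪ {♠} defined by φ'(♠) = ♠v and φ'|_A = φ^m. -/
/-- The starting position in `φ(x)` of the image block `φ(x j)` of the `j`-th letter of a
one-sided sequence `x`. -/
def blockStartN {A : Type*} (φ : A → List A) (x : ℕ → A) (j : ℕ) : ℕ :=
  ∑ t ∈ Finset.range j, (φ (x t)).length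

open Classical in
/-- The extension of a substitution `φ` to one-sided sequences:
`φ(x₀x₁x₂…) = φ(x₀)φ(x₁)φ(x₂)…`. -/
noncomputable def substNgen {A : Type*} [Inhabited A] (φ : A → List A) (x : ℕ → A) :
    ℕ → A :=
  fun n =>
    if h : ∃ j : ℕ, blockStartN φ x j ≤ n ∧ n < blockStartN φ x (j + 1) then
      (φ (x h.choose)).getD (n - blockStartN φ x h.choose) default
    else default

/-- The shift `T^c` on one-sided sequences (`T` is the left shift). -/
def shiftN {A : Type*} (c : ℕ) (x : ℕ → A) : ℕ → A := fun n => x (n + c)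

/-- A finite word `u` is a prefix of the one-sided sequence `x`. -/
def isPrefixSeq {A : Type*} [Inhabited A] (u : List A) (x : ℕ → A) : Prop :=
  ∀ i : ℕ, i < u.length → u.getD i default = x i

/-- The substitution `φ'` on `A ∪ {♠}` (with `♠` encoded as `none`) defined by
`φ'(♠) = ♠v` and `φ'(a) = φ^m(a)` for `a ∈ A`. -/
def spadeSubst {A : Type*} (φ : A → List A) (v : List A) (m : ℕ) :
    Option A → List (Option A) :=
  fun o => o.elim (none :: v.map some) (fun a => ((substWord φ)^[m] [a]).map some)

/-!
Since `φ'(♠) = ♠v` begins with `♠` and every image under `φ'` is nonempty, the words `φ'^k(♠)`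
form a chain of prefixes of unbounded length, and the sequence they define is a fixed point of
`φ'`. Applying `φ^m` to `v φ^m(v) ⋯ φ^{(k-1)m}(v)` shifts every block one place, so
`φ'^k(♠) = ♠ v φ^m(v) ⋯ φ^{(k-1)m}(v)`, and removing `♠` leaves the sequence of the theorem.
-/

section SubstWord

variable {A : Type*} (φ : A → List A)

theorem substWord_append (u w : List A) :
    substWord φ (u ++ w) = substWord φ u ++ substWord φ w :=
  List.flatMap_append

theorem substWord_iterate (k : ℕ) (w : List A) :
    (substWord φ)^[k] w = substWord (fun a => (substWord φ)^[k] [a]) w := by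
  induction k generalizing w with
  | zero => simp [substWord]
  | succ k ih =>
    rw [Function.iterate_succ_apply, ih, substWord, substWord, List.flatMap_assoc]
    refine List.flatMap_congr fun a _ => ?_
    rw [Function.iterate_succ_apply, ih (substWord φ [a])]
    simp [substWord]

theorem substWord_iterate_append (k : ℕ) (u w : List A) :
    (substWord φ)^[k] (u ++ w) = (substWord φ)^[k] u ++ (substWord φ)^[k] w := by
  rw [substWord_iterate, substWord_append, ← substWord_iterate, ← substWord_iterate]

theorem le_length_substWord (hne : ∀ a, φ a ≠ []) (w : List A) :
    w.length ≤ (substWord φ w).length := by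
  induction w with
  | nil => simp
  | cons a w ih =>
    have := List.length_pos_iff.mpr (hne a)
    simp only [substWord, List.flatMap_cons, List.length_append, List.length_cons] at ih ⊢
    omega

theorem substWord_iterate_ne_nil (hne : ∀ a, φ a ≠ []) {w : List A} (hw : w ≠ []) (k : ℕ) :
    (substWord φ)^[k] w ≠ [] := by
  induction k with
  | zero => exact hw
  | succ k ih =>
    rw [Function.iterate_succ_apply', ← List.length_pos_iff]
    exact lt_of_lt_of_le (List.length_pos_iff.mpr ih) (le_length_substWord φ hne _)

theorem substWord_iterate_succ_singleton {a : A} {u : List A} (ha : φ a = a :: u) (k : ℕ) :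
    (substWord φ)^[k + 1] [a] = (substWord φ)^[k] [a] ++ (substWord φ)^[k] u := by
  rw [Function.iterate_succ_apply, ← substWord_iterate_append]
  simp [substWord, ha]

theorem lt_length_substWord_iterate (hne : ∀ b, φ b ≠ []) {a : A} {u : List A} (hu : u ≠ [])
    (ha : φ a = a :: u) (k : ℕ) : k < ((substWord φ)^[k] [a]).length := by
  induction k with
  | zero => simp
  | succ k ih =>
    have := List.length_pos_iff.mpr (substWord_iterate_ne_nil φ hne hu k)
    rw [substWord_iterate_succ_singleton φ ha, List.length_append]
    omega

end SubstWord

section Sequences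

variable {B : Type*} [Inhabited B]

theorem isPrefixSeq.of_prefix {u w : List B} {x : ℕ → B} (hw : isPrefixSeq w x) (h : u <+: w) :
    isPrefixSeq u x := by
  intro i hi
  rw [List.getD_eq_getElem _ _ hi, h.getElem hi, ← List.getD_eq_getElem]
  exact hw i (lt_of_lt_of_le hi h.length_le)

theorem isPrefixSeq.range_map_prefix {u : List B} {x : ℕ → B} (hu : isPrefixSeq u x) {k : ℕ}
    (hk : k ≤ u.length) : (List.range k).map x <+: u := by
  rw [List.prefix_iff_eq_take]
  refine List.ext_getElem (by simpa using hk) fun i h₁ h₂ => ?_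
  simp only [List.length_map, List.length_range] at h₁
  rw [List.getElem_map, List.getElem_range, List.getElem_take, ← List.getD_eq_getElem _ default,
    hu i (by omega)]

/-- The sequence whose `n`-th letter is that of `Y n`; it has every `Y k` as a prefix when the
`Y k` form a prefix chain with `k < |Y k|`. -/
def seqOfPrefixes (Y : ℕ → List B) : ℕ → B := fun n => (Y n).getD n default

theorem isPrefixSeq_seqOfPrefixes {Y : ℕ → List B} (hY : ∀ k, Y k <+: Y (k + 1))
    (hlen : ∀ k, k < (Y k).length) (k : ℕ) : isPrefixSeq (Y k) (seqOfPrefixes Y) := by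
  have chain : ∀ {i j}, i ≤ j → Y i <+: Y j := fun h =>
    Nat.le_induction (List.prefix_refl _) (fun j _ ih => ih.trans (hY j)) _ h
  intro i hi
  rw [seqOfPrefixes, List.getD_eq_getElem _ _ hi, List.getD_eq_getElem _ _ (hlen i),
    (chain (le_max_left k i)).getElem hi, (chain (le_max_right k i)).getElem (hlen i)]

end Sequences

section Blocks

variable {B : Type*} (ψ : B → List B) (x : ℕ → B)

theorem substWord_range_map_succ (k : ℕ) :
    substWord ψ ((List.range (k + 1)).map x) = substWord ψ ((List.range k).map x) ++ ψ (x k) := by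
  rw [List.range_succ, List.map_append, substWord_append]
  simp [substWord]

theorem blockStartN_eq_length (k : ℕ) :
    blockStartN ψ x k = (substWord ψ ((List.range k).map x)).length := by
  induction k with
  | zero => rfl
  | succ k ih =>
    rw [blockStartN, Finset.sum_range_succ, ← blockStartN, ih, substWord_range_map_succ,
      List.length_append]

theorem blockStartN_mono : Monotone (blockStartN ψ x) := fun _ _ h =>
  Finset.sum_le_sum_of_subset (Finset.range_subset_range.mpr h)

variable [Inhabited B]

theorem substNgen_apply_of_mem_block {j n : ℕ} (h₁ : blockStartN ψ x j ≤ n)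
    (h₂ : n < blockStartN ψ x (j + 1)) :
    substNgen ψ x n = (ψ (x j)).getD (n - blockStartN ψ x j) default := by
  have hex : ∃ j, blockStartN ψ x j ≤ n ∧ n < blockStartN ψ x (j + 1) := ⟨j, h₁, h₂⟩
  have hchoose : hex.choose = j := by
    obtain ⟨c₁, c₂⟩ := hex.choose_spec
    rcases lt_trichotomy hex.choose j with h | h | h
    · have := blockStartN_mono ψ x (show hex.choose + 1 ≤ j from h)
      omega
    · exact h
    · have := blockStartN_mono ψ x (show j + 1 ≤ hex.choose from h)
      omega
  rw [substNgen, dif_pos hex, hchoose]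

theorem substNgen_apply_eq_getD {k n : ℕ} (hn : n < blockStartN ψ x k) :
    substNgen ψ x n = (substWord ψ ((List.range k).map x)).getD n default := by
  induction k with
  | zero => exact absurd hn (Nat.not_lt_zero n)
  | succ k ih =>
    rw [substWord_range_map_succ]
    by_cases hk : n < blockStartN ψ x k
    · rw [ih hk, List.getD_append _ _ _ _ (blockStartN_eq_length ψ x k ▸ hk)]
    · rw [substNgen_apply_of_mem_block ψ x (not_lt.mp hk) hn,
        List.getD_append_right _ _ _ _ (by rw [← blockStartN_eq_length]; omega),
        ← blockStartN_eq_length]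

theorem substNgen_eq_self (hne : ∀ b, ψ b ≠ [])
    (h : ∀ k, isPrefixSeq (substWord ψ ((List.range k).map x)) x) : substNgen ψ x = x := by
  funext n
  have hn : n < blockStartN ψ x (n + 1) := by
    rw [blockStartN_eq_length]
    exact lt_of_lt_of_le (by simp) (le_length_substWord ψ hne _)
  rw [substNgen_apply_eq_getD ψ x hn]
  exact h (n + 1) n (blockStartN_eq_length ψ x _ ▸ hn)

end Blocks

section Prolongable

variable {B : Type*} [Inhabited B]

/-- `ψ^ω(a)`, the sequence with prefixes `ψ^k(a)`. -/
def substOmega (ψ : B → List B) (a : B) : ℕ → B :=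
  seqOfPrefixes fun k => (substWord ψ)^[k] [a]

variable {ψ : B → List B} {a : B} {u : List B}

theorem isPrefixSeq_substOmega (hne : ∀ b, ψ b ≠ []) (hu : u ≠ []) (ha : ψ a = a :: u)
    (k : ℕ) : isPrefixSeq ((substWord ψ)^[k] [a]) (substOmega ψ a) :=
  isPrefixSeq_seqOfPrefixes (fun k => ⟨_, (substWord_iterate_succ_singleton ψ ha k).symm⟩)
    (lt_length_substWord_iterate ψ hne hu ha) k

theorem substNgen_substOmega (hne : ∀ b, ψ b ≠ []) (hu : u ≠ []) (ha : ψ a = a :: u) :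
    substNgen ψ (substOmega ψ a) = substOmega ψ a := by
  refine substNgen_eq_self ψ _ hne fun k => ?_
  have hk : (List.range k).map (substOmega ψ a) <+: (substWord ψ)^[k] [a] :=
    (isPrefixSeq_substOmega hne hu ha k).range_map_prefix
      (lt_length_substWord_iterate ψ hne hu ha k).le
  refine (isPrefixSeq_substOmega hne hu ha (k + 1)).of_prefix ?_
  rw [Function.iterate_succ_apply']
  exact hk.flatMap ψ

end Prolongable

section ConcatPowers

variable {A : Type*} (φ : A → List A) (v : List A) (m : ℕ)

def concatPowers (k : ℕ) : List A :=
  (List.range k).flatMap fun j => (substWord φ)^[j * m] v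

theorem concatPowers_succ (k : ℕ) :
    concatPowers φ v m (k + 1) = v ++ (substWord φ)^[m] (concatPowers φ v m k) := by
  rw [concatPowers, List.range_succ_eq_map, List.flatMap_cons, List.flatMap_map, concatPowers,
    substWord_iterate φ m, substWord, List.flatMap_assoc]
  congr 1
  · simp
  · refine List.flatMap_congr fun j _ => ?_
    rw [Nat.succ_mul, add_comm, Function.iterate_add_apply, substWord_iterate φ m]
    rfl

theorem substWord_spadeSubst_map_some (w : List A) :
    substWord (spadeSubst φ v m) (w.map some) = ((substWord φ)^[m] w).map some := by
  rw [substWord_iterate]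
  simp [substWord, spadeSubst, List.flatMap_map, List.map_flatMap]

theorem substWord_spadeSubst_iterate_none (k : ℕ) :
    (substWord (spadeSubst φ v m))^[k] [none] = none :: (concatPowers φ v m k).map some := by
  induction k with
  | zero => rfl
  | succ k ih =>
    rw [Function.iterate_succ_apply', ih, ← List.singleton_append, substWord_append,
      substWord_spadeSubst_map_some, concatPowers_succ]
    simp [substWord, spadeSubst]

theorem spadeSubst_ne_nil {φ : A → List A} (hne : ∀ a, φ a ≠ []) (b : Option A) :
    spadeSubst φ v m b ≠ [] := by
  cases b with
  | none => exact List.cons_ne_nil _ _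
  | some a =>
    simpa [spadeSubst] using substWord_iterate_ne_nil φ hne (List.cons_ne_nil a []) m

end ConcatPowers

theorem concat_powers_is_substitutive_general {A : Type*} [Inhabited A] (φ : A → List A)
    (hne : ∀ a, φ a ≠ []) (v : List A) (hv : v ≠ []) (m : ℕ) :
    ∃ y : ℕ → Option A,
      y 0 = none ∧
      substNgen (spadeSubst φ v m) y = y ∧
      ∀ n : ℕ, (y (n + 1)).getD v.headI
        = ((List.range (n + 1)).flatMap (fun j => (substWord φ)^[j * m] v)).getD n default := by
  have hψ := spadeSubst_ne_nil v m hne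
  have hv' : v.map some ≠ [] := by simpa using hv
  have hspade : spadeSubst φ v m none = none :: v.map some := rfl
  refine ⟨substOmega (spadeSubst φ v m) none, rfl, substNgen_substOmega hψ hv' hspade,
    fun n => ?_⟩
  have hlen := lt_length_substWord_iterate _ hψ hv' hspade (n + 1)
  rw [substWord_spadeSubst_iterate_none, List.length_cons, List.length_map] at hlen
  change (((substWord _)^[n + 1] [none]).getD (n + 1) none).getD _ = _
  rw [substWord_spadeSubst_iterate_none, List.getD_cons_succ,
    List.getD_eq_getElem _ _ (by simpa using hlen), List.getElem_map, Option.getD_some,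
    ← List.getD_eq_getElem _ default]
  rfl

/-- Let `φ` be a substitution on `A` (with nonempty images), `v` a nonempty finite word
over `A`, and `m ≥ 1`. Then the one-sided sequence `v · φ^m(v) · φ^{2m}(v) · ⋯` is
substitutive: it is the image under the coding `♠ ↦ v₀, a ↦ a` of the fixed point
`♠ v φ^m(v) φ^{2m}(v) ⋯` of the substitution `φ'` on `A ∪ {♠}` given by `φ'(♠) = ♠v`,
`φ'|_A = φ^m`. -/
theorem concat_powers_is_substitutive {A : Type*} [Inhabited A] (φ : A → List A)
    (hne : ∀ a, φ a ≠ []) (v : List A) (hv : v ≠ []) (m : ℕ) (hm : 1 ≤ m) :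
    ∃ y : ℕ → Option A,
      y 0 = none ∧
      substNgen (spadeSubst φ v m) y = y ∧
      ∀ n : ℕ, (y (n + 1)).getD v.headI
        = ((List.range (n + 1)).flatMap (fun j => (substWord φ)^[j * m] v)).getD n default :=
  concat_powers_is_substitutive_general φ hne v hv m
end

section
/- Let φ be a growing substitution on A and let c : ℕ → ℕ be a sequence. Then there are at most |A|³ nonperiodic points x ∈ X_φ admitting a desubstitution sequence (x^i)_{i≥0} in X_φ with x⁰ = x, x^i = T^{c_i}(φ(x^{i+1})), and 0 ≤ c_i < |φ(x^{i+1}_0)| for all i, where the desubstitution is recognizable (unique) on nonperiodic points. -/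
/-- The starting position in `φ(x)` of the image block `φ(x j)` of the `j`-th letter of a
biinfinite sequence `x` (with position `0` at the start of `φ(x 0)`). -/
def blockStart {A : Type*} (φ : A → List A) (x : ℤ → A) (j : ℤ) : ℤ :=
  if 0 ≤ j then ∑ t ∈ Finset.range j.toNat, ((φ (x (t : ℤ))).length : ℤ)
  else - ∑ t ∈ Finset.range (-j).toNat, ((φ (x (-(t : ℤ) - 1))).length : ℤ)

open Classical in
/-- The extension of a substitution `φ` to biinfinite sequences:
`φ(…x₋₁.x₀x₁…) = …φ(x₋₁).φ(x₀)φ(x₁)…`, position `0` being the start of `φ(x 0)`. -/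
noncomputable def substZgen {A : Type*} [Inhabited A] (φ : A → List A) (x : ℤ → A) :
    ℤ → A :=
  fun n =>
    if h : ∃ j : ℤ, blockStart φ x j ≤ n ∧ n < blockStart φ x (j + 1) then
      (φ (x h.choose)).getD (n - blockStart φ x h.choose).toNat default
    else default

/-- A biinfinite sequence `x` belongs to the subshift `X_φ` generated by the substitution
`φ`: every factor of `x` appears in `φ^n(a)` for some letter `a` and some `n`. -/
def memXphi {A : Type*} (φ : A → List A) (x : ℤ → A) : Prop :=
  ∀ (i : ℤ) (L : ℕ), ∃ (a : A) (n : ℕ),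
    (List.ofFn (fun j : Fin L => x (i + j))) <:+: (substWord φ)^[n] [a]

/-- A biinfinite sequence is (shift-)periodic. -/
def periodicZ {A : Type*} (x : ℤ → A) : Prop :=
  ∃ p : ℕ, 0 < p ∧ ∀ n : ℤ, x (n + p) = x n

/-! Two desubstitution sequences `(x^i)`, `(y^i)` with the same shifts `c` that agree on a window
`[p, q] ∋ 0` at level `i + 1` agree at level `i` on the union of the image blocks `φ(x^{i+1}_t)`,
`p ≤ t ≤ q`, shifted by `c i`. Iterating, agreement on `[-1, 1]` at level `i` makes `x⁰` and `y⁰`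
agree on `[-|φⁱ(x^i_{-1})|, |φⁱ(x^i_1)|]`, which exhausts `ℤ` as `i → ∞` because `φ` is growing.
If there were more than `|A|³` such points, at every level two of them would agree on `[-1, 1]`,
hence the same two for infinitely many levels, and they would coincide. -/

open Filter Set

theorem finite_and_natCard_le_of_frequently_eq {ι β : Type*} [Finite β] (f : ℕ → ι → β)
    (h : ∀ x y, (∃ᶠ i in atTop, f i x = f i y) → x = y) :
    Finite ι ∧ Nat.card ι ≤ Nat.card β := by
  have hemb : ∀ {n : ℕ} (e : Fin n ↪ ι), n ≤ Nat.card β := by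
    intro n e
    by_contra! hlt
    obtain ⟨g, hg⟩ := Finite.exists_infinite_fiber fun i => f i ∘ e
    obtain ⟨a, b, hab, hgab⟩ : ∃ a b, a ≠ b ∧ g a = g b := by
      by_contra! hinj
      have := Nat.card_le_card_of_injective g fun a b hab => by_contra fun h => hinj a b h hab
      simp only [Nat.card_eq_fintype_card, Fintype.card_fin] at this
      omega
    refine hab (e.injective (h _ _ (Nat.frequently_atTop_iff_infinite.2 ?_)))
    refine (Set.infinite_coe_iff.1 hg).mono fun i hi => ?_
    have hi : f i ∘ e = g := hi
    exact (congrFun hi a).trans (hgab.trans (congrFun hi b).symm)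
  have : Finite ι := by
    by_contra hfin
    have := not_finite_iff_infinite.1 hfin
    have := hemb (Fin.valEmbedding.trans (Infinite.natEmbedding ι) : Fin (Nat.card β + 1) ↪ ι)
    omega
  exact ⟨this, by simpa using hemb (Finite.equivFin ι).symm.toEmbedding⟩

section Substitution

variable {A : Type*} (φ : A → List A)

def iterLength (n : ℕ) (a : A) : ℕ := ((substWord φ)^[n] [a]).length

theorem substWord_iterate_eq_flatMap (n : ℕ) (w : List A) :
    (substWord φ)^[n] w = w.flatMap fun b => (substWord φ)^[n] [b] := by
  induction n generalizing w with
  | zero => simp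
  | succ n ih =>
    rw [Function.iterate_succ_apply', ih, substWord, List.flatMap_assoc]
    congr 1
    funext b
    rw [Function.iterate_succ_apply']
    rfl

theorem iterLength_zero (a : A) : iterLength φ 0 a = 1 := rfl

theorem iterLength_succ (n : ℕ) (a : A) :
    iterLength φ (n + 1) a = ((φ a).map (iterLength φ n)).sum := by
  rw [iterLength, Function.iterate_succ_apply, substWord_iterate_eq_flatMap, List.length_flatMap]
  rw [substWord, List.flatMap_singleton]
  rfl

theorem blockStart_zero (x : ℤ → A) : blockStart φ x 0 = 0 := by simp [blockStart]

theorem blockStart_succ (x : ℤ → A) (j : ℤ) :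
    blockStart φ x (j + 1) = blockStart φ x j + (φ (x j)).length := by
  rcases le_or_gt 0 j with hj | hj
  · rw [blockStart, blockStart, if_pos hj, if_pos (by omega),
      show (j + 1).toNat = j.toNat + 1 by omega, Finset.sum_range_succ, Int.toNat_of_nonneg hj]
  · obtain rfl | hj' := eq_or_ne j (-1)
    · norm_num [blockStart]
    · rw [blockStart, blockStart, if_neg (by omega), if_neg (by omega),
        show (-j).toNat = (-(j + 1)).toNat + 1 by omega, Finset.sum_range_succ,
        Int.toNat_of_nonneg (by omega : 0 ≤ -(j + 1)), show -(-(j + 1)) - 1 = j by ring]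
      ring

theorem blockStart_mono (x : ℤ → A) : Monotone (blockStart φ x) :=
  monotone_int_of_le_succ fun j => by rw [blockStart_succ]; omega

theorem blockStart_congr {x y : ℤ → A} {p q : ℤ} (hp : p ≤ 0) (hq : 0 ≤ q)
    (hxy : EqOn x y (Icc p q)) {j : ℤ} (hpj : p ≤ j) (hjq : j ≤ q + 1) :
    blockStart φ x j = blockStart φ y j := by
  unfold blockStart
  split_ifs with hj
  · refine Finset.sum_congr rfl fun t ht => ?_
    rw [hxy ⟨by omega, by simp at ht; omega⟩]
  · refine congrArg _ (Finset.sum_congr rfl fun t ht => ?_)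
    rw [hxy ⟨by simp at ht; omega, by omega⟩]

theorem exists_mem_Icc_blockStart_le_lt (x : ℤ → A) {p q n : ℤ} (hpq : p ≤ q)
    (hp : blockStart φ x p ≤ n) (hq : n < blockStart φ x (q + 1)) :
    ∃ j ∈ Icc p q, blockStart φ x j ≤ n ∧ n < blockStart φ x (j + 1) := by
  induction q, hpq using Int.leInduction with
  | base => exact ⟨p, ⟨le_rfl, le_rfl⟩, hp, hq⟩
  | succ q hpq ih =>
    by_cases hn : n < blockStart φ x (q + 1)
    · obtain ⟨j, hj, hjn⟩ := ih hn
      exact ⟨j, ⟨hj.1, by linarith [hj.2]⟩, hjn⟩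
    · exact ⟨q + 1, ⟨by omega, le_rfl⟩, not_lt.1 hn, hq⟩

theorem substZgen_eq_getD [Inhabited A] (x : ℤ → A) {j n : ℤ} (hj : blockStart φ x j ≤ n)
    (hn : n < blockStart φ x (j + 1)) :
    substZgen φ x n = (φ (x j)).getD (n - blockStart φ x j).toNat default := by
  have hex : ∃ k, blockStart φ x k ≤ n ∧ n < blockStart φ x (k + 1) := ⟨j, hj, hn⟩
  have hblock : hex.choose = j := by
    obtain ⟨hk, hkn⟩ := hex.choose_spec
    by_contra hne
    rcases lt_or_gt_of_ne hne with hlt | hlt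
    · linarith [blockStart_mono φ x (show hex.choose + 1 ≤ j by omega)]
    · linarith [blockStart_mono φ x (show j + 1 ≤ hex.choose by omega)]
  rw [substZgen, dif_pos hex, hblock]

theorem substZgen_eqOn [Inhabited A] {x y : ℤ → A} {p q : ℤ} (hp : p ≤ 0) (hq : 0 ≤ q)
    (hxy : EqOn x y (Icc p q)) :
    EqOn (substZgen φ x) (substZgen φ y) (Ico (blockStart φ x p) (blockStart φ x (q + 1))) := by
  intro n ⟨hpn, hnq⟩
  obtain ⟨j, ⟨hpj, hjq⟩, hjn, hnj⟩ := exists_mem_Icc_blockStart_le_lt φ x (by omega) hpn hnq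
  have hstart := blockStart_congr φ hp hq hxy hpj (by omega)
  have hend := blockStart_congr φ hp hq hxy (by omega : p ≤ j + 1) (by omega)
  rw [substZgen_eq_getD φ x hjn hnj, substZgen_eq_getD φ y (hstart ▸ hjn) (hend ▸ hnj),
    hstart, hxy ⟨hpj, hjq⟩]

end Substitution

section Sums

variable {A M : Type*} [Inhabited A] [AddCommMonoid M] (φ : A → List A)

theorem List.sum_range_getD_map (g : A → M) (l : List A) :
    ∑ k ∈ Finset.range l.length, g (l.getD k default) = (l.map g).sum := by
  rw [Finset.sum_range, ← List.sum_ofFn]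
  congr 1
  apply List.ext_getElem <;> simp

theorem sum_Ico_blockStart_succ_substZgen (g : A → M) (x : ℤ → A) (j : ℤ) :
    ∑ n ∈ Finset.Ico (blockStart φ x j) (blockStart φ x (j + 1)), g (substZgen φ x n) =
      ((φ (x j)).map g).sum := by
  rw [← List.sum_range_getD_map, Int.Ico_eq_finset_map, Finset.sum_map, blockStart_succ,
    add_sub_cancel_left, Int.toNat_natCast]
  refine Finset.sum_congr rfl fun k hk => ?_
  have hk : k < (φ (x j)).length := Finset.mem_range.1 hk
  simp only [Function.Embedding.trans_apply, Nat.castEmbedding_apply, addLeftEmbedding_apply]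
  rw [substZgen_eq_getD φ x (le_add_of_nonneg_right (Nat.cast_nonneg k))
    (by rw [blockStart_succ]; omega), add_sub_cancel_left, Int.toNat_natCast]

theorem sum_Ico_blockStart_substZgen (g : A → M) (x : ℤ → A) {p q : ℤ} (hpq : p ≤ q) :
    ∑ n ∈ Finset.Ico (blockStart φ x p) (blockStart φ x q), g (substZgen φ x n) =
      ∑ t ∈ Finset.Ico p q, ((φ (x t)).map g).sum := by
  induction q, hpq using Int.leInduction with
  | base => simp
  | succ q hpq ih =>
    rw [← Finset.Ico_union_Ico_eq_Ico (blockStart_mono φ x hpq) (blockStart_mono φ x (by omega)),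
      Finset.sum_union (Finset.Ico_disjoint_Ico_consecutive _ _ _), ih,
      sum_Ico_blockStart_succ_substZgen, Finset.sum_Ico_add_eq_sum_Ico_add_one hpq]

end Sums

section Desubstitution

variable {A : Type*} [Inhabited A] (φ : A → List A)

theorem sum_Ico_iterLength_succ (i c : ℕ) (y : ℤ → A) {p q : ℤ} (hpq : p ≤ q) :
    ∑ t ∈ Finset.Ico p q, iterLength φ (i + 1) (y t) =
      ∑ m ∈ Finset.Ico (blockStart φ y p - c) (blockStart φ y q - c),
        iterLength φ i (shiftZ c (substZgen φ y) m) := by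
  simp only [shiftZ, iterLength_succ]
  rw [Finset.sum_Ico_add' (fun m => iterLength φ i (substZgen φ y m)), sub_add_cancel,
    sub_add_cancel, sum_Ico_blockStart_substZgen φ _ y hpq]

variable (c : ℕ → ℕ) {xs ys : ℕ → ℤ → A}

theorem eqOn_Icc_of_desubstitution (hx : ∀ i, xs i = shiftZ (c i) (substZgen φ (xs (i + 1))))
    (hc : ∀ i, c i < (φ (xs (i + 1) 0)).length)
    (hy : ∀ i, ys i = shiftZ (c i) (substZgen φ (ys (i + 1)))) (i : ℕ) {p q : ℤ} (hp : p ≤ 0)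
    (hq : 0 ≤ q) (h : EqOn (xs i) (ys i) (Icc p q)) :
    EqOn (xs 0) (ys 0) (Icc (-(∑ t ∈ Finset.Ico p 0, iterLength φ i (xs i t) : ℕ))
      (∑ t ∈ Finset.Ico 1 (q + 1), iterLength φ i (xs i t) : ℕ)) := by
  induction i generalizing p q with
  | zero =>
    simp only [iterLength_zero, Finset.sum_const, Int.card_Ico, smul_eq_mul, mul_one]
    exact h.mono (Icc_subset_Icc (by omega) (by omega))
  | succ i ih =>
    set y := xs (i + 1)
    have hlen : blockStart φ y 1 = (φ (y 0)).length := by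
      rw [← zero_add 1, blockStart_succ, blockStart_zero, zero_add]
    have hci : c i < (φ (y 0)).length := hc i
    have hp' : blockStart φ y p - c i ≤ 0 := by
      linarith [blockStart_mono φ y hp, blockStart_zero φ y]
    have hq' : 1 ≤ blockStart φ y (q + 1) - c i := by
      linarith [blockStart_mono φ y (show (1 : ℤ) ≤ q + 1 by omega)]
    have hagree : EqOn (xs i) (ys i)
        (Icc (blockStart φ y p - c i) (blockStart φ y (q + 1) - c i - 1)) := by
      intro m ⟨hpm, hmq⟩
      rw [hx i, hy i]
      exact substZgen_eqOn φ hp hq h ⟨by omega, by omega⟩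
    refine (ih hp' (by omega) hagree).mono (Icc_subset_Icc ?_ ?_)
    · rw [sum_Ico_iterLength_succ φ i (c i) y hp, ← hx i, neg_le_neg_iff, Nat.cast_le]
      exact Finset.sum_le_sum_of_subset (Finset.Ico_subset_Ico le_rfl (by simp [blockStart_zero]))
    · rw [sum_Ico_iterLength_succ φ i (c i) y (by omega : (1 : ℤ) ≤ q + 1), ← hx i, Nat.cast_le,
        sub_add_cancel]
      exact Finset.sum_le_sum_of_subset (Finset.Ico_subset_Ico (by omega) le_rfl)

theorem desubstitution_zero_eq_of_frequently_eqOn [Finite A]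
    (hgrow : ∀ a, Tendsto (fun n => iterLength φ n a) atTop atTop)
    (hx : ∀ i, xs i = shiftZ (c i) (substZgen φ (xs (i + 1))))
    (hc : ∀ i, c i < (φ (xs (i + 1) 0)).length)
    (hy : ∀ i, ys i = shiftZ (c i) (substZgen φ (ys (i + 1))))
    (h : ∃ᶠ i in atTop, EqOn (xs i) (ys i) (Icc (-1) 1)) : xs 0 = ys 0 := by
  funext n
  have hlong : ∀ᶠ i in atTop, ∀ a, n.natAbs ≤ iterLength φ i a :=
    eventually_all.2 fun a => (hgrow a).eventually_ge_atTop _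
  obtain ⟨i, hi, hlong⟩ := (h.and_eventually hlong).exists
  refine eqOn_Icc_of_desubstitution φ c hx hc hy i (by norm_num) zero_le_one hi ?_
  have hleft : Finset.Ico (-1 : ℤ) 0 = {-1} := by decide
  have hright : Finset.Ico (1 : ℤ) (1 + 1) = {1} := by decide
  simp only [hleft, hright, Finset.sum_singleton, mem_Icc]
  have := hlong (xs i (-1))
  have := hlong (xs i 1)
  omega

end Desubstitution

theorem finite_and_natCard_le_of_forall_desubstitution {A : Type*} [Inhabited A] [Fintype A]
    (φ : A → List A) (hgrow : ∀ a, Tendsto (fun n => iterLength φ n a) atTop atTop)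
    (c : ℕ → ℕ) (S : Set (ℤ → A))
    (hS : ∀ x ∈ S, ∃ xs : ℕ → ℤ → A, xs 0 = x ∧
      (∀ i, xs i = shiftZ (c i) (substZgen φ (xs (i + 1)))) ∧
      ∀ i, c i < (φ (xs (i + 1) 0)).length) :
    S.Finite ∧ Nat.card S ≤ Fintype.card A ^ 3 := by
  choose xs hxs0 hxs hc using hS
  obtain ⟨hfin, hcard⟩ := finite_and_natCard_le_of_frequently_eq
    (fun i (x : S) (m : Icc (-1 : ℤ) 1) => xs x x.2 i m) fun x y hxy => Subtype.ext <| by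
      rw [← hxs0 x x.2, ← hxs0 y y.2]
      exact desubstitution_zero_eq_of_frequently_eqOn φ c hgrow (hxs x x.2) (hc x x.2)
        (hxs y y.2) (hxy.mono fun i hi m hm => congrFun hi ⟨m, hm⟩)
  refine ⟨Set.finite_coe_iff.1 hfin, hcard.trans_eq ?_⟩
  simp

theorem card_nonperiodic_with_desubstitution_le_general {A : Type*} [Inhabited A] [Fintype A]
    (φ : A → List A)
    (hgrow : ∀ a : A, Filter.Tendsto (fun n => ((substWord φ)^[n] [a]).length)
      Filter.atTop Filter.atTop)
    (c : ℕ → ℕ) :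
    Set.Finite {x : ℤ → A | memXphi φ x ∧ ¬ periodicZ x ∧
        ∃ xs : ℕ → ℤ → A, xs 0 = x ∧ (∀ i, memXphi φ (xs i)) ∧
          ∀ i, xs i = shiftZ (c i : ℤ) (substZgen φ (xs (i + 1))) ∧
            c i < (φ (xs (i + 1) 0)).length} ∧
    Nat.card {x : ℤ → A | memXphi φ x ∧ ¬ periodicZ x ∧
        ∃ xs : ℕ → ℤ → A, xs 0 = x ∧ (∀ i, memXphi φ (xs i)) ∧
          ∀ i, xs i = shiftZ (c i : ℤ) (substZgen φ (xs (i + 1))) ∧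
            c i < (φ (xs (i + 1) 0)).length}
      ≤ Fintype.card A ^ 3 :=
  finite_and_natCard_le_of_forall_desubstitution φ hgrow c _
    fun _ ⟨_, _, xs, hxs0, _, hxs⟩ => ⟨xs, hxs0, fun i => (hxs i).1, fun i => (hxs i).2⟩

/-- Let `φ` be a growing substitution on a finite alphabet `A` and `c : ℕ → ℕ` a
sequence. Then there are at most `|A|³` nonperiodic points `x ∈ X_φ` admitting a
desubstitution sequence `(x^i)` in `X_φ` with `x⁰ = x`, `x^i = T^{c_i}(φ(x^{i+1}))` and
`0 ≤ c_i < |φ(x^{i+1}_0)|` for all `i`. -/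
theorem card_nonperiodic_with_desubstitution_le {A : Type*} [Inhabited A] [Fintype A]
    (φ : A → List A) (hne : ∀ a, φ a ≠ [])
    (hgrow : ∀ a : A, Filter.Tendsto (fun n => ((substWord φ)^[n] [a]).length)
      Filter.atTop Filter.atTop)
    (c : ℕ → ℕ) :
    Set.Finite {x : ℤ → A | memXphi φ x ∧ ¬ periodicZ x ∧
        ∃ xs : ℕ → ℤ → A, xs 0 = x ∧ (∀ i, memXphi φ (xs i)) ∧
          ∀ i, xs i = shiftZ (c i : ℤ) (substZgen φ (xs (i + 1))) ∧
            c i < (φ (xs (i + 1) 0)).length} ∧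
    Nat.card {x : ℤ → A | memXphi φ x ∧ ¬ periodicZ x ∧
        ∃ xs : ℕ → ℤ → A, xs 0 = x ∧ (∀ i, memXphi φ (xs i)) ∧
          ∀ i, xs i = shiftZ (c i : ℤ) (substZgen φ (xs (i + 1))) ∧
            c i < (φ (xs (i + 1) 0)).length}
      ≤ Fintype.card A ^ 3 :=
  card_nonperiodic_with_desubstitution_le_general φ hgrow c
end
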